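/- For any pointer list P, the iteration of cde stabilizes: there exists n such that cde^{n+1}(P) = cde^n(P), and the stabilized sequence E(P) = cde^n(P) is a pointer list containing no adjacent equal entries. -/

import Mathlib

/-!
An effective `cde` step removes an adjacent equal pair `x i = x (i + 1)`. In a pointer list the
value `|x i|` is then neither the minimum nor the maximum (these are attained only once), so it is
intermediate and occurs at `i` and `i + 1` only. Removing the two indices therefore keeps the unique
extremes and the twinning of intermediate absolute values. The consecutive pairs either survive
unchanged or, if the removed pair straddles two of them, merge into one pair
`(x (i - 1), x (i + 2))`, which inherits the sign condition and the gap condition because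
`|x i|` occurs nowhere else. Each effective step shortens the list, so the iteration reaches a
fixed point of `cde`, and these are exactly the lists without adjacent equal entries.
-/

/-- A finite sequence of integers (0-indexed list) is a *pointer list*:
(1) even positive length; (2) unique index of minimum absolute value;
(3) unique index of maximum absolute value; (4) each intermediate absolute
value occurs at exactly one other index; (5) for each even (0-based) index i,
x i ≤ x (i+1) and x i * x (i+1) > 0; (6) for each even (0-based) index i no
entry has absolute value strictly between |x i| and |x (i+1)|. -/
def IsPointerList (P : List ℤ) : Prop :=
  P.length % 2 = 0 ∧ 0 < P.length ∧
  (∃! i, i < P.length ∧ ∀ j < P.length, |P.getD i 0| ≤ |P.getD j 0|) ∧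
  (∃! i, i < P.length ∧ ∀ j < P.length, |P.getD j 0| ≤ |P.getD i 0|) ∧
  (∀ i < P.length, (∃ j < P.length, |P.getD j 0| < |P.getD i 0|) →
      (∃ j < P.length, |P.getD i 0| < |P.getD j 0|) →
      ∃! j, j < P.length ∧ j ≠ i ∧ |P.getD j 0| = |P.getD i 0|) ∧
  (∀ i, i % 2 = 0 → i + 1 < P.length →
      P.getD i 0 ≤ P.getD (i+1) 0 ∧ 0 < P.getD i 0 * P.getD (i+1) 0) ∧
  (∀ i, i % 2 = 0 → i + 1 < P.length →
      ¬ ∃ j < P.length,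
        (|P.getD i 0| < |P.getD j 0| ∧ |P.getD j 0| < |P.getD (i+1) 0|) ∨
        (|P.getD (i+1) 0| < |P.getD j 0| ∧ |P.getD j 0| < |P.getD i 0|))

-- Context directed excision: delete the first adjacent equal pair, if any.
open Classical in
noncomputable def cde (P : List ℤ) : List ℤ :=
  if h : ∃ i, i + 1 < P.length ∧ P.getD i 0 = P.getD (i+1) 0 then
    P.take (Nat.find h) ++ P.drop (Nat.find h + 2)
  else P

-- Context directed reversal: for the minimal i admitting j > i with
-- x i = -(x j) (and the minimal such j), reverse and negate the segment
-- from position i+1 through j.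
open Classical in
noncomputable def cdr (P : List ℤ) : List ℤ :=
  if h : ∃ i, ∃ j, i < j ∧ j < P.length ∧ P.getD i 0 = -(P.getD j 0) then
    let i := Nat.find h
    let j := Nat.find (Nat.find_spec h)
    P.take (i+1) ++ (((P.drop (i+1)).take (j - i)).reverse.map (fun z => -z)) ++
      P.drop (j+1)
  else P

-- Context directed block swap: for the lexicographically least (i, j)
-- admitting k, ℓ with i < j < k < ℓ, x i = x k, x j = x ℓ, interchange
-- the blocks x_{i+1}..x_{j-1} and x_k..x_ℓ.
open Classical in
noncomputable def cds (P : List ℤ) : List ℤ :=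
  if h : ∃ i, ∃ j, ∃ k, ∃ l, i < j ∧ j < k ∧ k < l ∧ l < P.length ∧
      P.getD i 0 = P.getD k 0 ∧ P.getD j 0 = P.getD l 0 then
    let i := Nat.find h
    let j := Nat.find (Nat.find_spec h)
    let k := Nat.find (Nat.find_spec (Nat.find_spec h))
    let l := Nat.find (Nat.find_spec (Nat.find_spec (Nat.find_spec h)))
    P.take (i+1) ++ ((P.drop k).take (l - k + 1)) ++ ((P.drop j).take (k - j)) ++
      ((P.drop (i+1)).take (j - i - 1)) ++ P.drop (l+1)
  else P

/-- The doubling map π: each entry z is replaced by (z, z+1) if z > 0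
and by (z-1, z) if z < 0. -/
def piMap (M : List ℤ) : List ℤ :=
  M.flatMap (fun z => if 0 < z then [z, z + 1] else [z - 1, z])

/-- One step of the HNS algorithm: apply cde if applicable, else cds if
applicable, else cdr. -/
noncomputable def hnsStep (P : List ℤ) : List ℤ :=
  if cde P ≠ P then cde P else if cds P ≠ P then cds P else cdr P

/-- The index in `l` of the `j`-th entry of `l.take i ++ l.drop (i + 2)`. -/
def skipPair (i j : ℕ) : ℕ := if j < i then j else j + 2

section SkipPair

variable {i j k n : ℕ}

lemma skipPair_lt (hj : j < n - 2) : skipPair i j < n := by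
  unfold skipPair; split <;> omega

lemma skipPair_injective (i : ℕ) : Function.Injective (skipPair i) := by
  intro j k; unfold skipPair; split <;> split <;> omega

lemma skipPair_ne_self (i j : ℕ) : skipPair i j ≠ i := by
  unfold skipPair; split <;> omega

lemma skipPair_ne_succ (i j : ℕ) : skipPair i j ≠ i + 1 := by
  unfold skipPair; split <;> omega

lemma exists_skipPair_eq (hi : i + 1 < n) (hk : k < n) (hki : k ≠ i) (hki' : k ≠ i + 1) :
    ∃ j < n - 2, skipPair i j = k := by
  rcases lt_or_gt_of_ne hki with h | h
  · exact ⟨k, by omega, if_pos h⟩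
  · exact ⟨k - 2, by omega, by rw [skipPair, if_neg (by omega)]; omega⟩

/-- Away from the removed pair, a pair `(e, e + 1)` of the shortened list is a pair of the
original; when `i` is odd, the pairs `(i - 1, i)` and `(i + 1, i + 2)` merge into
`(i - 1, i + 2)`. -/
lemma forall_pair_skipPair (hi : i + 1 < n) (Q : ℕ → ℕ → Prop)
    (hQ : ∀ e, e % 2 = 0 → e + 1 < n → Q e (e + 1))
    (hbridge : ∀ e, e % 2 = 0 → i = e + 1 → e + 3 < n → Q e (e + 3)) :
    ∀ e, e % 2 = 0 → e + 1 < n - 2 → Q (skipPair i e) (skipPair i (e + 1)) := by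
  intro e he hen
  unfold skipPair
  by_cases h₁ : e + 1 < i
  · rw [if_pos (by omega), if_pos h₁]
    exact hQ e he (by omega)
  by_cases h₂ : i ≤ e
  · rw [if_neg (by omega), if_neg (by omega)]
    exact hQ (e + 2) (by omega) (by omega)
  · rw [if_pos (by omega), if_neg h₁]
    exact hbridge e he (by omega) (by omega)

end SkipPair

lemma List.length_take_append_drop_add_two {α : Type*} {l : List α} {i : ℕ}
    (hi : i + 1 < l.length) : (l.take i ++ l.drop (i + 2)).length = l.length - 2 := by
  simp only [List.length_append, List.length_take, List.length_drop]; omega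

lemma List.getD_take_append_drop_add_two {α : Type*} (l : List α) (i j : ℕ) (d : α) :
    (l.take i ++ l.drop (i + 2)).getD j d = l.getD (skipPair i j) d := by
  simp only [skipPair, List.getD_eq_getElem?_getD, List.getElem?_append, List.getElem?_take,
    List.getElem?_drop, List.length_take]
  split_ifs <;> try rfl
  all_goals rcases le_or_gt i l.length with hl | hl <;>
    first
      | (exfalso; omega)
      | (congr 2; omega)
      | rw [List.getElem?_eq_none (by omega), List.getElem?_eq_none (by omega)]

section Extremum

variable {α : Type*} [LinearOrder α] {a : ℕ → α} {n i : ℕ}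

lemma exists_lt_of_existsUnique_min (hmin : ∃! k, k < n ∧ ∀ j < n, a k ≤ a j)
    (hi : i + 1 < n) (heq : a i = a (i + 1)) : ∃ j < n, a j < a i := by
  obtain ⟨k, ⟨hk, hkmin⟩, huniq⟩ := hmin
  refine ⟨k, hk, (hkmin i (by omega)).lt_of_ne fun hki => ?_⟩
  have h₁ : i = k := huniq i ⟨by omega, fun j hj => hki ▸ hkmin j hj⟩
  have h₂ : i + 1 = k := huniq (i + 1) ⟨hi, fun j hj => heq ▸ hki ▸ hkmin j hj⟩
  omega

lemma existsUnique_min_skipPair (hmin : ∃! k, k < n ∧ ∀ j < n, a k ≤ a j)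
    (hi : i + 1 < n) (heq : a i = a (i + 1)) :
    ∃! k, k < n - 2 ∧ ∀ j < n - 2, a (skipPair i k) ≤ a (skipPair i j) := by
  obtain ⟨m, hm, hlow⟩ := exists_lt_of_existsUnique_min hmin hi heq
  obtain ⟨k₀, ⟨hk₀, hk₀min⟩, huniq⟩ := hmin
  have hk₀i : a k₀ < a i := (hk₀min m hm).trans_lt hlow
  obtain ⟨k₁, hk₁, rfl⟩ := exists_skipPair_eq hi hk₀ (by rintro rfl; exact hk₀i.false)
    (by rintro rfl; exact (heq ▸ hk₀i).false)
  refine ⟨k₁, ⟨hk₁, fun j hj => hk₀min _ (skipPair_lt hj)⟩, fun k ⟨hk, hkmin⟩ => ?_⟩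
  refine skipPair_injective i (huniq _ ⟨skipPair_lt hk, fun j hj => ?_⟩)
  by_cases hji : j = i ∨ j = i + 1
  · have : a (skipPair i k) < a j := by
      rcases hji with rfl | rfl
      · exact (hkmin k₁ hk₁).trans_lt hk₀i
      · exact heq ▸ (hkmin k₁ hk₁).trans_lt hk₀i
    exact this.le
  · push Not at hji
    obtain ⟨j', hj', rfl⟩ := exists_skipPair_eq hi hj hji.1 hji.2
    exact hkmin j' hj'

lemma existsUnique_max_skipPair (hmax : ∃! k, k < n ∧ ∀ j < n, a j ≤ a k)
    (hi : i + 1 < n) (heq : a i = a (i + 1)) :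
    ∃! k, k < n - 2 ∧ ∀ j < n - 2, a (skipPair i j) ≤ a (skipPair i k) :=
  existsUnique_min_skipPair (α := αᵒᵈ) hmax hi heq

lemma eq_or_eq_succ_of_apply_eq_apply (hmin : ∃! k, k < n ∧ ∀ j < n, a k ≤ a j)
    (hmax : ∃! k, k < n ∧ ∀ j < n, a j ≤ a k)
    (hmid : ∀ c < n, (∃ j < n, a j < a c) → (∃ j < n, a c < a j) →
      ∃! d, d < n ∧ d ≠ c ∧ a d = a c)
    (hi : i + 1 < n) (heq : a i = a (i + 1)) {j : ℕ} (hj : j < n) (hji : a j = a i) :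
    j = i ∨ j = i + 1 := by
  obtain ⟨d, -, hd⟩ := hmid i (by omega) (exists_lt_of_existsUnique_min hmin hi heq)
    (exists_lt_of_existsUnique_min (α := αᵒᵈ) hmax hi heq)
  by_contra! h
  exact h.2 ((hd j ⟨hj, h.1, hji⟩).trans (hd (i + 1) ⟨hi, by omega, heq.symm⟩).symm)

lemma existsUnique_twin_skipPair
    (hmid : ∀ c < n, (∃ j < n, a j < a c) → (∃ j < n, a c < a j) →
      ∃! d, d < n ∧ d ≠ c ∧ a d = a c)
    (hi : i + 1 < n) (heq : a i = a (i + 1)) (hocc : ∀ j < n, a j = a i → j = i ∨ j = i + 1) :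
    ∀ c < n - 2, (∃ j < n - 2, a (skipPair i j) < a (skipPair i c)) →
      (∃ j < n - 2, a (skipPair i c) < a (skipPair i j)) →
      ∃! d, d < n - 2 ∧ d ≠ c ∧ a (skipPair i d) = a (skipPair i c) := by
  rintro c hc ⟨s, hs, hlow⟩ ⟨t, ht, hhigh⟩
  obtain ⟨d, ⟨hd, hdc, hdeq⟩, huniq⟩ :=
    hmid _ (skipPair_lt hc) ⟨_, skipPair_lt hs, hlow⟩ ⟨_, skipPair_lt ht, hhigh⟩
  have hdi : ¬(d = i ∨ d = i + 1) := by
    intro hdi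
    have hci : a (skipPair i c) = a i := by
      rcases hdi with rfl | rfl
      exacts [hdeq.symm, hdeq.symm.trans heq.symm]
    rcases hocc _ (skipPair_lt hc) hci with h | h
    exacts [skipPair_ne_self _ _ h, skipPair_ne_succ _ _ h]
  push Not at hdi
  obtain ⟨d', hd', rfl⟩ := exists_skipPair_eq hi hd hdi.1 hdi.2
  refine ⟨d', ⟨hd', fun h => hdc (h ▸ rfl), hdeq⟩, fun e ⟨he, hec, heeq⟩ => ?_⟩
  exact skipPair_injective i
    (huniq _ ⟨skipPair_lt he, fun h => hec (skipPair_injective i h), heeq⟩)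

end Extremum

lemma between_or_eq_or_between {α : Type*} [LinearOrder α] {x y w : α}
    (h : x < w ∧ w < y ∨ y < w ∧ w < x) (v : α) :
    (x < w ∧ w < v ∨ v < w ∧ w < x) ∨ w = v ∨ (v < w ∧ w < y ∨ y < w ∧ w < v) := by
  rcases lt_trichotomy w v with hv | hv | hv <;> tauto

lemma le_and_mul_pos_trans {x y z : ℤ} (hxy : x ≤ y ∧ 0 < x * y) (hyz : y ≤ z ∧ 0 < y * z) :
    x ≤ z ∧ 0 < x * z := by
  refine ⟨hxy.1.trans hyz.1, ?_⟩
  nlinarith [mul_pos hxy.2 hyz.2, sq_nonneg y]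

theorem IsPointerList.take_append_drop_add_two {P : List ℤ} (hP : IsPointerList P) {i : ℕ}
    (hi : i + 1 < P.length) (heq : P.getD i 0 = P.getD (i + 1) 0) :
    IsPointerList (P.take i ++ P.drop (i + 2)) := by
  obtain ⟨hev, -, hmin, hmax, hmid, hpair, hgap⟩ := hP
  have habs : |P.getD i 0| = |P.getD (i + 1) 0| := congrArg abs heq
  have hocc := fun j (hj : j < P.length) =>
    eq_or_eq_succ_of_apply_eq_apply (a := fun j => |P.getD j 0|) hmin hmax hmid hi habs (j := j) hj
  unfold IsPointerList
  simp only [List.length_take_append_drop_add_two hi, List.getD_take_append_drop_add_two]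
  have hmin' := existsUnique_min_skipPair hmin hi habs
  obtain ⟨k, hk, -⟩ := hmin'.exists
  refine ⟨by omega, by omega, hmin', existsUnique_max_skipPair hmax hi habs,
    existsUnique_twin_skipPair hmid hi habs hocc, ?_, ?_⟩
  · refine forall_pair_skipPair hi
      (fun e f => P.getD e 0 ≤ P.getD f 0 ∧ 0 < P.getD e 0 * P.getD f 0) hpair ?_
    rintro e he rfl he₃
    exact le_and_mul_pos_trans (hpair e he (by omega)) (heq ▸ hpair (e + 2) (by omega) (by omega))
  · refine forall_pair_skipPair hi (fun e f => ¬∃ j < P.length - 2,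
      (|P.getD e 0| < |P.getD (skipPair i j) 0| ∧ |P.getD (skipPair i j) 0| < |P.getD f 0|) ∨
      (|P.getD f 0| < |P.getD (skipPair i j) 0| ∧ |P.getD (skipPair i j) 0| < |P.getD e 0|))
      (fun e he he₁ ⟨j, hj, h⟩ => hgap e he he₁ ⟨_, skipPair_lt hj, h⟩) ?_
    rintro e he rfl he₃ ⟨j, hj, h⟩
    rcases between_or_eq_or_between h |P.getD (e + 1) 0| with h' | h' | h'
    · exact hgap e he (by omega) ⟨_, skipPair_lt hj, h'⟩
    · rcases hocc _ (skipPair_lt hj) h' with h'' | h''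
      exacts [skipPair_ne_self _ _ h'', skipPair_ne_succ _ _ h'']
    · exact hgap (e + 2) (by omega) (by omega) ⟨_, skipPair_lt hj, habs ▸ h'⟩

lemma exists_cde_eq_take_append_drop {Q : List ℤ}
    (h : ∃ i, i + 1 < Q.length ∧ Q.getD i 0 = Q.getD (i + 1) 0) :
    ∃ i, i + 1 < Q.length ∧ Q.getD i 0 = Q.getD (i + 1) 0 ∧
      cde Q = Q.take i ++ Q.drop (i + 2) := by
  unfold cde
  rw [dif_pos h]
  exact ⟨_, (Nat.find_spec h).1, (Nat.find_spec h).2, rfl⟩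

lemma cde_eq_self_iff {Q : List ℤ} :
    cde Q = Q ↔ ∀ i, i + 1 < Q.length → Q.getD i 0 ≠ Q.getD (i + 1) 0 := by
  refine ⟨fun hQ i hi heq => ?_, fun h => dif_neg fun ⟨i, hi, heq⟩ => h i hi heq⟩
  obtain ⟨j, hj, -, hcde⟩ := exists_cde_eq_take_append_drop ⟨i, hi, heq⟩
  have := congrArg List.length (hcde.symm.trans hQ)
  rw [List.length_take_append_drop_add_two hj] at this
  omega

lemma IsPointerList.cde {Q : List ℤ} (hQ : IsPointerList Q) (hne : cde Q ≠ Q) :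
    IsPointerList (cde Q) ∧ (cde Q).length < Q.length := by
  rw [Ne, cde_eq_self_iff] at hne
  push Not at hne
  obtain ⟨i, hi, heq, hcde⟩ := exists_cde_eq_take_append_drop hne
  rw [hcde, List.length_take_append_drop_add_two hi]
  exact ⟨hQ.take_append_drop_add_two hi heq, by omega⟩

theorem Function.exists_isFixedPt_iterate_of_measure_lt {α : Type*} (f : α → α) (p : α → Prop)
    (μ : α → ℕ) (hf : ∀ x, p x → f x ≠ x → p (f x) ∧ μ (f x) < μ x) (x : α) (hx : p x) :
    ∃ n, Function.IsFixedPt f (f^[n] x) ∧ p (f^[n] x) := by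
  induction hμ : μ x using Nat.strong_induction_on generalizing x with
  | _ m ih =>
    by_cases hfx : f x = x
    · exact ⟨0, hfx, hx⟩
    obtain ⟨hpf, hlt⟩ := hf x hx hfx
    obtain ⟨n, hn⟩ := ih _ (hμ ▸ hlt) (f x) hpf rfl
    exact ⟨n + 1, hn⟩

/-- the iteration of cde on a pointer list stabilizes, and the
stabilized value is a pointer list with no adjacent equal entries. -/
theorem stmt17 (P : List ℤ) (hP : IsPointerList P) :
    ∃ n, cde^[n+1] P = cde^[n] P ∧ IsPointerList (cde^[n] P) ∧
      ∀ i, i + 1 < (cde^[n] P).length →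
        (cde^[n] P).getD i 0 ≠ (cde^[n] P).getD (i+1) 0 := by
  obtain ⟨n, hfix, hn⟩ := Function.exists_isFixedPt_iterate_of_measure_lt cde IsPointerList
    List.length (fun _ hQ hne => hQ.cde hne) P hP
  exact ⟨n, (Function.iterate_succ_apply' cde n P).trans hfix, hn, cde_eq_self_iff.mp hfix⟩
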